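/- arXiv:2011.04809 — 5 statements merged into one kernel-verified Lean document; each statement's English description precedes it below -/
import Mathlib

section
/- Fix an integer k ≥ 3 and a real r > 0, and set m = ⌈rn⌉ and q = 1 − 2^{1−k}. Let X be the number of 2-colorings of H_k(n,m). Then there exists a constant A > 0 (depending only on k and r) such that for all sufficiently large n, E[X] ≥ A · (2 q^r)^n. -/
open Filter Real

/-- `c` is a proper 2-coloring of the multi-hypergraph with edge tuple `E`:
no edge is monochromatic. -/
def ProperColoring {n k m : ℕ} (E : Fin m → {s : Finset (Fin n) // s.card = k})
    (c : Fin n → Bool) : Prop :=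
  ∀ i : Fin m, ∃ u ∈ (E i).1, ∃ v ∈ (E i).1, c u ≠ c v

/-- The expected number of 2-colorings of the random `k`-uniform hypergraph `H_k(n,m)`
whose `m` edges are chosen uniformly, independently and with replacement from all
`C(n,k)` possible `k`-subsets of `{1,…,n}`. -/
noncomputable def expNumColorings (k n m : ℕ) : ℝ :=
  (∑ E : Fin m → {s : Finset (Fin n) // s.card = k},
      (Nat.card {c : Fin n → Bool // ProperColoring E c} : ℝ)) / ((n.choose k : ℝ) ^ m)

/-!
Under a fixed coloring `c`, each edge of `H_k(n,m)` is independently non-monochromatic with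
probability `p_c`, the fraction of `k`-sets that `c` does not make monochromatic, so
`E[X] = ∑_c p_c ^ m`. A `k`-set is monochromatic under exactly `2 ^ (n - k + 1)` of the `2 ^ n`
colorings, so the `p_c` average to `q`, and convexity of `t ↦ t ^ m` gives `E[X] ≥ 2 ^ n q ^ m`.
Finally `m = ⌈rn⌉ ≤ rn + 1` turns this into `E[X] ≥ q (2 q ^ r) ^ n`.
-/

open Finset

section Counting

variable {α : Type*} [Fintype α] [DecidableEq α]

def bichromaticSets (k : ℕ) (c : α → Bool) : Finset {s : Finset α // s.card = k} :=
  {s | ∃ u ∈ s.1, ∃ v ∈ s.1, c u ≠ c v}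

lemma card_filter_forall_apply_eq (s : Finset α) (b : Bool) :
    #{c : α → Bool | ∀ u ∈ s, c u = b} = 2 ^ (Fintype.card α - #s) := by
  have : ({c : α → Bool | ∀ u ∈ s, c u = b} : Finset _) =
      Fintype.piFinset fun u => if u ∈ s then {b} else univ := by
    ext c
    simp only [mem_filter, mem_univ, true_and, Fintype.mem_piFinset]
    refine ⟨fun h u => ?_, fun h u hu => by simpa [hu] using h u⟩
    split_ifs with hu <;> simp [h u, hu]
  rw [this, Fintype.card_piFinset, prod_apply_ite]
  simp [filter_not, card_univ_sdiff]

lemma card_monochromatic_eq (s : Finset α) (hs : s.Nonempty) :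
    #{c : α → Bool | ¬∃ u ∈ s, ∃ v ∈ s, c u ≠ c v} = 2 ^ (Fintype.card α - #s + 1) := by
  obtain ⟨w, hw⟩ := hs
  have hsplit : ({c : α → Bool | ¬∃ u ∈ s, ∃ v ∈ s, c u ≠ c v} : Finset _) =
      ({c : α → Bool | ∀ u ∈ s, c u = true} : Finset _) ∪
        ({c : α → Bool | ∀ u ∈ s, c u = false} : Finset _) := by
    ext c
    simp only [mem_filter, mem_union, mem_univ, true_and, not_exists, not_and, not_not]
    refine ⟨fun h => ?_, ?_⟩
    · cases hc : c w
      · exact .inr fun u hu => (h u hu w hw).trans hc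
      · exact .inl fun u hu => (h u hu w hw).trans hc
    · rintro (h | h) u hu v hv <;> rw [h u hu, h v hv]
  have hdisj : Disjoint ({c : α → Bool | ∀ u ∈ s, c u = true} : Finset _)
      ({c : α → Bool | ∀ u ∈ s, c u = false} : Finset _) :=
    disjoint_filter.2 fun c _ ht hf => by simpa [ht w hw] using hf w hw
  rw [hsplit, card_union_of_disjoint hdisj, card_filter_forall_apply_eq,
    card_filter_forall_apply_eq, pow_succ, mul_two]

lemma card_bichromatic_add_two_pow (s : Finset α) (hs : s.Nonempty) :
    #{c : α → Bool | ∃ u ∈ s, ∃ v ∈ s, c u ≠ c v} + 2 ^ (Fintype.card α - #s + 1) =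
      2 ^ Fintype.card α := by
  rw [← card_monochromatic_eq s hs, card_filter_add_card_filter_not, card_univ]
  simp

lemma sum_card_bichromaticSets_add_eq {k : ℕ} (hk : 1 ≤ k) :
    ∑ c : α → Bool, #(bichromaticSets k c) +
        (Fintype.card α).choose k * 2 ^ (Fintype.card α - k + 1) =
      (Fintype.card α).choose k * 2 ^ Fintype.card α := by
  have := sum_card_bipartiteAbove_eq_sum_card_bipartiteBelow
    (s := (univ : Finset (α → Bool))) (t := (univ : Finset {s : Finset α // s.card = k}))
    (r := fun c s => ∃ u ∈ s.1, ∃ v ∈ s.1, c u ≠ c v)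
  simp only [bipartiteAbove, bipartiteBelow] at this
  have hterm (s : {s : Finset α // s.card = k}) :
      #{c : α → Bool | ∃ u ∈ s.1, ∃ v ∈ s.1, c u ≠ c v} + 2 ^ (Fintype.card α - k + 1) =
        2 ^ Fintype.card α := by
    simpa [s.2] using card_bichromatic_add_two_pow s.1 (card_pos.1 (by rw [s.2]; omega))
  unfold bichromaticSets
  rw [this, ← Fintype.card_finset_len, ← card_univ, ← smul_eq_mul, ← smul_eq_mul,
    ← sum_const, ← sum_const, ← sum_add_distrib]
  exact sum_congr rfl fun s _ => hterm s

lemma sum_card_bichromaticSets_div_choose_eq {k : ℕ} (hk : 1 ≤ k) (hkα : k ≤ Fintype.card α) :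
    ∑ c : α → Bool, (#(bichromaticSets k c) : ℝ) / (Fintype.card α).choose k =
      2 ^ Fintype.card α * (1 - 2 ^ (1 - (k : ℝ))) := by
  set N := Fintype.card α
  have hcount : (∑ c : α → Bool, (#(bichromaticSets k c) : ℝ)) + N.choose k * 2 ^ (N - k + 1) =
      N.choose k * 2 ^ N := by
    exact_mod_cast sum_card_bichromaticSets_add_eq hk
  have hpow : (2 : ℝ) ^ (N - k + 1) = 2 ^ N * 2 ^ (1 - (k : ℝ)) := by
    rw [← rpow_natCast, ← rpow_natCast, ← rpow_add two_pos]
    push_cast [hkα]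
    ring_nf
  have hchoose : (N.choose k : ℝ) ≠ 0 := by exact_mod_cast (Nat.choose_pos hkα).ne'
  rw [← sum_div, div_eq_iff hchoose]
  linear_combination hcount - N.choose k * hpow

end Counting

lemma properColoring_iff {n k m : ℕ} (E : Fin m → {s : Finset (Fin n) // s.card = k})
    (c : Fin n → Bool) : ProperColoring E c ↔ ∀ i, E i ∈ bichromaticSets k c := by
  simp [ProperColoring, bichromaticSets]

lemma sum_natCard_properColoring (n k m : ℕ) :
    ∑ E : Fin m → {s : Finset (Fin n) // s.card = k}, Nat.card {c // ProperColoring E c} =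
      ∑ c : Fin n → Bool, #(bichromaticSets k c) ^ m := by
  classical
  have := sum_card_bipartiteAbove_eq_sum_card_bipartiteBelow (s := univ) (t := univ)
    (r := fun E c => ProperColoring (k := k) (m := m) (n := n) E c)
  simp only [Nat.card_eq_fintype_card, Fintype.card_subtype]
  refine this.trans (sum_congr rfl fun c _ => ?_)
  rw [← Fintype.card_piFinset_const]
  congr 1
  ext E
  simp [bipartiteBelow, properColoring_iff]

lemma expNumColorings_eq_sum_pow (k n m : ℕ) :
    expNumColorings k n m =
      ∑ c : Fin n → Bool, ((#(bichromaticSets k c) : ℝ) / n.choose k) ^ m := by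
  simp_rw [div_pow, ← sum_div, expNumColorings]
  congr 1
  exact_mod_cast sum_natCard_properColoring n k m

lemma two_pow_mul_pow_le_expNumColorings {k n : ℕ} (hk : 1 ≤ k) (hkn : k ≤ n) (m : ℕ) :
    2 ^ n * (1 - (2 : ℝ) ^ (1 - (k : ℝ))) ^ m ≤ expNumColorings k n m := by
  set p : (Fin n → Bool) → ℝ := fun c => (#(bichromaticSets k c) : ℝ) / n.choose k
  have hsum : ∑ c, p c = 2 ^ n * (1 - 2 ^ (1 - (k : ℝ))) := by
    simpa using sum_card_bichromaticSets_div_choose_eq (α := Fin n) hk (by simpa using hkn)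
  have h2n : (0 : ℝ) < 2 ^ n := by positivity
  have hweights : ∑ _c : Fin n → Bool, (2 ^ n : ℝ)⁻¹ = 1 := by
    simp [card_univ, h2n.ne']
  have hjensen := pow_arith_mean_le_arith_mean_pow univ (fun _ => (2 ^ n : ℝ)⁻¹) p
    (fun _ _ => by positivity) hweights (fun _ _ => by positivity) m
  rw [← mul_sum, ← mul_sum, hsum, inv_mul_cancel_left₀ h2n.ne'] at hjensen
  rw [expNumColorings_eq_sum_pow]
  exact (le_inv_mul_iff₀ h2n).1 hjensen

lemma mul_rpow_le_pow_natCeil {q x : ℝ} (hq0 : 0 < q) (hq1 : q ≤ 1) (hx : 0 ≤ x) :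
    q * q ^ x ≤ q ^ ⌈x⌉₊ := by
  rw [← rpow_natCast, ← rpow_one_add' hq0.le (by positivity)]
  exact rpow_le_rpow_of_exponent_ge hq0 hq1 (by linarith [Nat.ceil_lt_add_one hx])

/-- First moment lower bound: for k ≥ 3 and r > 0, with q = 1 − 2^{1−k} and X the number
of 2-colorings of H_k(n, ⌈rn⌉), there is a constant A > 0 such that for all sufficiently
large n, E[X] ≥ A (2 q^r)^n. -/
theorem first_moment_lower_bound (k : ℕ) (hk : 3 ≤ k) (r : ℝ) (hr : 0 < r) :
    ∃ A > (0 : ℝ), ∀ᶠ n : ℕ in atTop,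
      A * (2 * (1 - (2 : ℝ) ^ (1 - (k : ℝ))) ^ r) ^ n ≤ expNumColorings k n ⌈r * n⌉₊ := by
  set q := 1 - (2 : ℝ) ^ (1 - (k : ℝ))
  have hq0 : 0 < q := sub_pos.2 (rpow_lt_one_of_one_lt_of_neg one_lt_two (by
    have : (3 : ℝ) ≤ k := by exact_mod_cast hk
    linarith))
  have hq1 : q ≤ 1 := sub_le_self _ (by positivity)
  refine ⟨q, hq0, ?_⟩
  filter_upwards [eventually_ge_atTop k] with n hkn
  calc q * (2 * q ^ r) ^ n = 2 ^ n * (q * q ^ (r * n)) := by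
        rw [mul_pow, ← rpow_natCast (q ^ r), ← rpow_mul hq0.le]
        ring
    _ ≤ 2 ^ n * q ^ ⌈r * n⌉₊ := by
        gcongr
        exact mul_rpow_le_pow_natCeil hq0 hq1 (by positivity)
    _ ≤ expNumColorings k n ⌈r * n⌉₊ := two_pow_mul_pow_le_expNumColorings (by omega) hkn _
end

section
/- Fix an integer k ≥ 3 and a real r > 0. If (α,β,γ) is a local extremum of g_r in the interior of its domain {(α,β,γ) : 0 < γ < min(α,β), α + β − γ < 1}, then α = β = 1/2. -/
open Real

/-- `p(α,β,γ)`: the probability that a random `k`-subset is bichromatic under both of a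
pair of colorings with black densities `α`, `β` and overlap `γ`. -/
noncomputable def hypP (k : ℕ) (α β γ : ℝ) : ℝ :=
  1 - α ^ k - (1 - α) ^ k - β ^ k - (1 - β) ^ k + γ ^ k + (α - γ) ^ k
    + (β - γ) ^ k + (1 - α - β + γ) ^ k

/-- The second-moment rate function
`g_r(α,β,γ) = (p(α,β,γ)/q²)^r / (4 γ^γ (α−γ)^{α−γ} (β−γ)^{β−γ} (1−α−β+γ)^{1−α−β+γ})`
with `q = 1 − 2^{1−k}` and the convention `0^0 = 1` (satisfied by `Real.rpow`). -/
noncomputable def hypG (k : ℕ) (r : ℝ) (α β γ : ℝ) : ℝ :=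
  (hypP k α β γ / (1 - (2 : ℝ) ^ (1 - (k : ℝ))) ^ 2) ^ r /
    (4 * γ ^ γ * (α - γ) ^ (α - γ) * (β - γ) ^ (β - γ) *
      (1 - α - β + γ) ^ (1 - α - β + γ))

/-!
Write `a = α - γ`, `b = β - γ`, `c = γ`, `d = 1 - α - β + γ` for the masses of the four cells cut
out by the two colourings. In these coordinates `p` is symmetric under `(a, b) ↔ (c, d)`, and
moving mass `s` from cell `c` to cell `d` changes `log g_r` at rate
`r k (F c - F d) / p - (log d - log c)`, where `F x = (a + x)^(k-1) + (b + x)^(k-1) - x^(k-1)` is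
strictly increasing. The two terms have opposite signs unless `c = d`, so at an extremum `c = d`,
i.e. `α + β = 1`; moving mass between `a` and `b` instead gives `α = β`.
-/

open Finset Topology

/-- `hypP` in cell coordinates, homogenised: `(a + b + c + d) ^ k` stands for `1`. -/
noncomputable def cellP (k : ℕ) (a b c d : ℝ) : ℝ :=
  (a + b + c + d) ^ k - (a + c) ^ k - (b + d) ^ k - (b + c) ^ k - (a + d) ^ k
    + a ^ k + b ^ k + c ^ k + d ^ k

noncomputable def cellG (k : ℕ) (r Q : ℝ) (a b c d : ℝ) : ℝ :=
  (cellP k a b c d / Q) ^ r / (4 * c ^ c * a ^ a * b ^ b * d ^ d)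

theorem hypP_eq_cellP (k : ℕ) (α β γ : ℝ) :
    hypP k α β γ = cellP k (α - γ) (β - γ) γ (1 - α - β + γ) := by
  unfold hypP cellP
  ring

theorem hypG_eq_cellG (k : ℕ) (r α β γ : ℝ) :
    hypG k r α β γ =
      cellG k r ((1 - (2 : ℝ) ^ (1 - (k : ℝ))) ^ 2) (α - γ) (β - γ) γ (1 - α - β + γ) := by
  rw [hypG, cellG, hypP_eq_cellP]

theorem cellG_swap (k : ℕ) (r Q a b c d : ℝ) : cellG k r Q a b c d = cellG k r Q c d a b := by
  have : cellP k a b c d = cellP k c d a b := by unfold cellP; ring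
  rw [cellG, cellG, this]
  ring

theorem add_pow_sub_pow_sub_pow {R : Type*} [CommRing R] (x y : R) (n : ℕ) :
    (x + y) ^ (n + 2) - x ^ (n + 2) - y ^ (n + 2) =
      ∑ j ∈ range (n + 1), ((n + 2).choose (j + 1) : R) * (x ^ (j + 1) * y ^ (n + 1 - j)) := by
  rw [add_pow, sum_range_succ, sum_range_succ']
  simp only [Nat.choose_self, Nat.cast_one, Nat.sub_self, pow_zero, Nat.choose_zero_right,
    Nat.sub_zero, mul_one, one_mul]
  rw [add_sub_cancel_right, add_sub_cancel_right]
  refine sum_congr rfl fun j _ => ?_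
  rw [show n + 2 - (j + 1) = n + 1 - j by omega]
  ring

theorem pow_mul_pow_add_pow_mul_pow_lt {a b c d : ℝ} (ha : 0 < a) (hb : 0 < b) (hc : 0 < c)
    (hd : 0 < d) {i j : ℕ} (hi : i ≠ 0) (hj : j ≠ 0) :
    c ^ i * b ^ j + a ^ i * d ^ j < (a + c) ^ i * (b + d) ^ j :=
  calc c ^ i * b ^ j + a ^ i * d ^ j
      < (a ^ i + c ^ i) * (b ^ j + d ^ j) := by
        nlinarith [mul_pos (pow_pos ha i) (pow_pos hb j), mul_pos (pow_pos hc i) (pow_pos hd j)]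
    _ ≤ (a + c) ^ i * (b + d) ^ j := mul_le_mul (pow_add_pow_le ha.le hc.le hi)
        (pow_add_pow_le hb.le hd.le hj) (by positivity) (by positivity)

theorem cellP_pos {k : ℕ} (hk : 2 ≤ k) {a b c d : ℝ} (ha : 0 < a) (hb : 0 < b) (hc : 0 < c)
    (hd : 0 < d) : 0 < cellP k a b c d := by
  obtain ⟨n, rfl⟩ : ∃ n, k = n + 2 := ⟨k - 2, by omega⟩
  have h : cellP (n + 2) a b c d =
      ((a + c) + (b + d)) ^ (n + 2) - (a + c) ^ (n + 2) - (b + d) ^ (n + 2)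
        - (((c + b) ^ (n + 2) - c ^ (n + 2) - b ^ (n + 2))
          + ((a + d) ^ (n + 2) - a ^ (n + 2) - d ^ (n + 2))) := by
    unfold cellP; ring
  rw [h, add_pow_sub_pow_sub_pow, add_pow_sub_pow_sub_pow, add_pow_sub_pow_sub_pow,
    ← sum_add_distrib, sub_pos]
  refine sum_lt_sum_of_nonempty ⟨0, by simp⟩ fun j hj => ?_
  have hj : j < n + 1 := mem_range.1 hj
  rw [← mul_add]
  exact mul_lt_mul_of_pos_left (pow_mul_pow_add_pow_mul_pow_lt ha hb hc hd j.succ_ne_zero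
    (Nat.sub_ne_zero_of_lt hj)) (Nat.cast_pos.2 (Nat.choose_pos (by omega)))

theorem add_pow_sub_pow_le_add_pow_sub_pow (n : ℕ) {a x y : ℝ} (ha : 0 ≤ a) (hx : 0 ≤ x)
    (hxy : x ≤ y) : (a + x) ^ n - x ^ n ≤ (a + y) ^ n - y ^ n := by
  have hy : 0 ≤ y := hx.trans hxy
  suffices y ^ n - x ^ n ≤ (a + y) ^ n - (a + x) ^ n by linarith
  rw [← geom_sum₂_mul, ← geom_sum₂_mul, show a + y - (a + x) = y - x by ring]
  refine mul_le_mul_of_nonneg_right (sum_le_sum fun i _ => ?_) (by linarith)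
  exact mul_le_mul (pow_le_pow_left₀ hy (by linarith) _) (pow_le_pow_left₀ hx (by linarith) _)
    (by positivity) (by positivity)

theorem add_pow_add_add_pow_sub_pow_lt {n : ℕ} (hn : n ≠ 0) {a b x y : ℝ} (ha : 0 ≤ a)
    (hb : 0 ≤ b) (hx : 0 ≤ x) (hxy : x < y) :
    (a + x) ^ n + (b + x) ^ n - x ^ n < (a + y) ^ n + (b + y) ^ n - y ^ n := by
  have := add_pow_sub_pow_le_add_pow_sub_pow n ha hx hxy.le
  have := pow_lt_pow_left₀ (by linarith : b + x < b + y) (by positivity) hn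
  linarith

theorem hasDerivAt_cellP_transfer (k : ℕ) (a b c d : ℝ) :
    HasDerivAt (fun s => cellP k a b (c - s) (d + s))
      (k * (((a + c) ^ (k - 1) + (b + c) ^ (k - 1) - c ^ (k - 1))
        - ((a + d) ^ (k - 1) + (b + d) ^ (k - 1) - d ^ (k - 1)))) 0 := by
  have hc : HasDerivAt (fun s : ℝ => c - s) (-1) 0 := (hasDerivAt_id 0).const_sub c
  have hd : HasDerivAt (fun s : ℝ => d + s) 1 0 := (hasDerivAt_id 0).const_add d
  have t₀ := ((hc.const_add (a + b)).add hd).pow k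
  have t₁ := (hc.const_add a).pow k
  have t₂ := (hd.const_add b).pow k
  have t₃ := (hc.const_add b).pow k
  have t₄ := (hd.const_add a).pow k
  unfold cellP
  refine ((((((((t₀.sub t₁).sub t₂).sub t₃).sub t₄).add_const (a ^ k)).add_const (b ^ k)).add
    (hc.pow k)).add (hd.pow k)).congr_deriv ?_
  simp only [sub_zero, add_zero]
  ring

theorem cellG_eq_exp {k : ℕ} {r Q a b c d : ℝ} (ha : 0 < a) (hb : 0 < b) (hc : 0 < c)
    (hd : 0 < d) (hP : 0 < cellP k a b c d / Q) :
    cellG k r Q a b c d = exp (r * log (cellP k a b c d / Q)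
      - (log 4 + (c * log c + a * log a + b * log b + d * log d))) := by
  rw [cellG, rpow_def_of_pos hP, rpow_def_of_pos hc, rpow_def_of_pos ha, rpow_def_of_pos hb,
    rpow_def_of_pos hd, exp_sub, exp_add, exp_add, exp_add, exp_add, exp_log four_pos]
  ring_nf

theorem eq_of_isLocalExtr_cellG_transfer {k : ℕ} (hk : 2 ≤ k) {r Q a b c d : ℝ} (hr : 0 < r)
    (hQ : 0 < Q) (ha : 0 < a) (hb : 0 < b) (hc : 0 < c) (hd : 0 < d)
    (h : IsLocalExtr (fun s => cellG k r Q a b (c - s) (d + s)) 0) : c = d := by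
  set ψ : ℝ → ℝ := fun s => r * log (cellP k a b (c - s) (d + s) / Q)
    - (log 4 + ((c - s) * log (c - s) + a * log a + b * log b + (d + s) * log (d + s)))
  have hexp : (fun s => cellG k r Q a b (c - s) (d + s)) =ᶠ[𝓝 0] fun s => exp (ψ s) := by
    filter_upwards [Ioo_mem_nhds (neg_lt_zero.2 hd) hc] with s ⟨hds, hcs⟩
    have hcs : 0 < c - s := sub_pos.2 hcs
    have hds : 0 < d + s := by linarith
    exact cellG_eq_exp ha hb hcs hds (div_pos (cellP_pos hk ha hb hcs hds) hQ)
  set P := cellP k a b c d with hP_def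
  have hP : 0 < P := cellP_pos hk ha hb hc hd
  set S := ((a + c) ^ (k - 1) + (b + c) ^ (k - 1) - c ^ (k - 1))
    - ((a + d) ^ (k - 1) + (b + d) ^ (k - 1) - d ^ (k - 1)) with hS_def
  have hψ : HasDerivAt ψ (r * k / P * S - (log d - log c)) 0 := by
    have hc' : HasDerivAt (fun s : ℝ => c - s) (-1) 0 := (hasDerivAt_id 0).const_sub c
    have hd' : HasDerivAt (fun s : ℝ => d + s) 1 0 := (hasDerivAt_id 0).const_add d
    have hlogP := ((hasDerivAt_cellP_transfer k a b c d).div_const Q).log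
      (by simpa using (div_pos hP hQ).ne')
    have hcc := (hasDerivAt_mul_log (by simpa using hc.ne')).comp (0 : ℝ) hc'
    have hdd := (hasDerivAt_mul_log (by simpa using hd.ne')).comp (0 : ℝ) hd'
    refine ((hlogP.const_mul r).sub
      ((((hcc.add_const _).add_const _).add hdd).const_add _)).congr_deriv ?_
    simp only [sub_zero, add_zero, hP_def, hS_def]
    field_simp
    ring
  have hcrit : r * k / P * S = log d - log c := by
    have := (h.congr hexp).hasDerivAt_eq_zero hψ.exp
    rw [mul_eq_zero, sub_eq_zero] at this
    exact this.resolve_left (exp_ne_zero _)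
  have hrkP : 0 < r * k / P := div_pos (mul_pos hr (Nat.cast_pos.2 (by omega))) hP
  have hk1 : k - 1 ≠ 0 := by omega
  rcases lt_trichotomy c d with hcd | hcd | hcd
  · have hS' : S < 0 := sub_neg.2 (add_pow_add_add_pow_sub_pow_lt hk1 ha.le hb.le hc.le hcd)
    nlinarith [log_lt_log hc hcd]
  · exact hcd
  · have hS' : 0 < S := sub_pos.2 (add_pow_add_add_pow_sub_pow_lt hk1 ha.le hb.le hd.le hcd)
    nlinarith [log_lt_log hd hcd]

/-- Lemma 6 of the paper: for k ≥ 3 and r > 0, every local extremum of g_r in the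
interior of its domain {(α,β,γ) : 0 < γ < min(α,β), α + β − γ < 1} has α = β = 1/2. -/
theorem hypG_local_extr (k : ℕ) (hk : 3 ≤ k) (r : ℝ) (hr : 0 < r) (α β γ : ℝ)
    (h1 : 0 < γ) (h2 : γ < α) (h3 : γ < β) (h4 : α + β - γ < 1)
    (hextr : IsLocalExtr (fun x : ℝ × ℝ × ℝ => hypG k r x.1 x.2.1 x.2.2) (α, β, γ)) :
    α = 1 / 2 ∧ β = 1 / 2 := by
  have hk2 : 2 ≤ k := by omega
  have hq : 0 < (1 - (2 : ℝ) ^ (1 - (k : ℝ))) ^ 2 := by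
    have hk' : (3 : ℝ) ≤ k := by exact_mod_cast hk
    exact pow_pos (sub_pos.2 (rpow_lt_one_of_one_lt_of_neg one_lt_two (by linarith))) 2
  have ha : 0 < α - γ := sub_pos.2 h2
  have hb : 0 < β - γ := sub_pos.2 h3
  have hd : 0 < 1 - α - β + γ := by linarith
  have hcd : γ = 1 - α - β + γ := by
    refine eq_of_isLocalExtr_cellG_transfer hk2 hr hq ha hb h1 hd ?_
    convert IsLocalExtr.comp_continuous (g := fun s : ℝ => (α - s, β - s, γ - s)) (b := 0)
      (by simpa using hextr) (by fun_prop) using 1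
    funext s
    rw [Function.comp_apply, hypG_eq_cellG]
    congr 1 <;> ring
  have hab : α - γ = β - γ := by
    refine eq_of_isLocalExtr_cellG_transfer hk2 hr hq h1 hd ha hb ?_
    convert IsLocalExtr.comp_continuous (g := fun s : ℝ => (α - s, β + s, γ)) (b := 0)
      (by simpa using hextr) (by fun_prop) using 1
    funext s
    rw [Function.comp_apply, hypG_eq_cellG, cellG_swap]
    congr 1 <;> ring
  constructor <;> linarith
end

section
/- Fix an integer k ≥ 2 and a real r > 0, and set q = 1 − 2^{1−k}. The function g(α) = (1 − α^k − (1−α)^k)^r / (α^α (1−α)^{1−α}) on [0,1] (with 0^0 = 1) attains its unique maximum at α = 1/2, where g(1/2) = 2 q^r; moreover its second derivative at 1/2 satisfies g''(1/2) = −8 (1−2^{1−k})^{r−1} (1 + 2^{1−k}(k(k−1)r − 1)) < 0. -/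
/-!
On `[0, 1]` the denominator is `α ^ α * (1 - α) ^ (1 - α) = exp (-H α)`, with `H` the binary
entropy, so `g α = s α ^ r * exp (H α)`. Both factors peak at `1 / 2`: `s` by convexity of
`x ↦ x ^ k`, and `H` strictly, since `H α < log 2` for `α ≠ 1 / 2`. Near `1 / 2` we have
`g = exp ∘ φ` with `φ = r * log s + H`; as `φ' (1 / 2) = 0`, the second derivative is
`g'' (1 / 2) = g (1 / 2) * φ'' (1 / 2) = 2 q ^ r * (r * s'' (1 / 2) / q - 4)`.
-/

open Real Filter Set Topology

lemma two_rpow_one_sub_natCast (k : ℕ) : (2 : ℝ) ^ (1 - (k : ℝ)) = 2 * (1 / 2) ^ k := by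
  rw [rpow_sub two_pos, rpow_one, rpow_natCast, one_div_pow, mul_one_div]

lemma two_rpow_one_sub_natCast_lt_one {k : ℕ} (hk : 2 ≤ k) : (2 : ℝ) ^ (1 - (k : ℝ)) < 1 :=
  rpow_lt_one_of_one_lt_of_neg one_lt_two (by linarith [(Nat.ofNat_le_cast.2 hk : (2 : ℝ) ≤ k)])

lemma self_rpow_self {x : ℝ} (hx : 0 ≤ x) : x ^ x = exp (x * log x) := by
  rcases hx.eq_or_lt with rfl | hx
  · simp
  · rw [rpow_def_of_pos hx, mul_comm]

lemma rpow_self_mul_one_sub_rpow_one_sub {α : ℝ} (h0 : 0 ≤ α) (h1 : α ≤ 1) :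
    α ^ α * (1 - α) ^ (1 - α) = exp (-binEntropy α) := by
  rw [self_rpow_self h0, self_rpow_self (sub_nonneg.2 h1), ← exp_add, binEntropy, log_inv,
    log_inv]
  ring_nf

theorem deriv_deriv_exp_comp {φ φ' : ℝ → ℝ} {x a : ℝ}
    (hφ : ∀ᶠ y in 𝓝 x, HasDerivAt φ (φ' y) y) (hφ' : HasDerivAt φ' a x) :
    deriv (deriv fun y => exp (φ y)) x = exp (φ x) * (φ' x ^ 2 + a) := by
  have hd : deriv (fun y => exp (φ y)) =ᶠ[𝓝 x] fun y => exp (φ y) * φ' y :=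
    hφ.mono fun y hy => hy.exp.deriv
  rw [hd.deriv_eq]
  exact (hφ.self_of_nhds.exp.mul hφ').deriv.trans (by ring)

noncomputable def bichromaticProb (k : ℕ) (α : ℝ) : ℝ := 1 - α ^ k - (1 - α) ^ k

noncomputable def bichromaticProbDeriv (k : ℕ) (α : ℝ) : ℝ :=
  k * ((1 - α) ^ (k - 1) - α ^ (k - 1))

section bichromaticProb

variable {k : ℕ} {α : ℝ}

lemma bichromaticProb_half (k : ℕ) : bichromaticProb k (1 / 2) = 1 - 2 ^ (1 - (k : ℝ)) := by
  rw [bichromaticProb, two_rpow_one_sub_natCast]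
  norm_num
  ring

lemma bichromaticProb_nonneg (hk : k ≠ 0) (h0 : 0 ≤ α) (h1 : α ≤ 1) :
    0 ≤ bichromaticProb k α := by
  have := pow_le_of_le_one h0 h1 hk
  have := pow_le_of_le_one (sub_nonneg.2 h1) (sub_le_self 1 h0) hk
  rw [bichromaticProb]
  linarith

lemma bichromaticProb_pos (hk : 2 ≤ k) (h0 : 0 < α) (h1 : α < 1) :
    0 < bichromaticProb k α := by
  have := pow_lt_self_of_lt_one₀ h0 h1 hk
  have := pow_lt_self_of_lt_one₀ (sub_pos.2 h1) (sub_lt_self 1 h0) hk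
  rw [bichromaticProb]
  linarith

lemma bichromaticProb_half_pos (hk : 2 ≤ k) : 0 < bichromaticProb k (1 / 2) :=
  bichromaticProb_pos hk (by norm_num) (by norm_num)

lemma bichromaticProb_le_half (h0 : 0 ≤ α) (h1 : α ≤ 1) :
    bichromaticProb k α ≤ bichromaticProb k (1 / 2) := by
  have := (convexOn_pow k).2 h0 (sub_nonneg.2 h1) (by norm_num : (0 : ℝ) ≤ 1 / 2)
    (by norm_num : (0 : ℝ) ≤ 1 / 2) (by norm_num)
  simp only [smul_eq_mul] at this
  rw [show (1 / 2 : ℝ) * α + 1 / 2 * (1 - α) = 1 / 2 by ring] at this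
  norm_num [bichromaticProb]
  linarith

lemma hasDerivAt_bichromaticProb (k : ℕ) (α : ℝ) :
    HasDerivAt (bichromaticProb k) (bichromaticProbDeriv k α) α := by
  have h := ((hasDerivAt_const α 1).sub (hasDerivAt_pow k α)).sub
    (((hasDerivAt_id α).const_sub 1).pow k)
  refine h.congr_deriv ?_
  simp only [bichromaticProbDeriv, id]
  ring

lemma hasDerivAt_bichromaticProbDeriv (hk : 1 ≤ k) (α : ℝ) :
    HasDerivAt (bichromaticProbDeriv k)
      (-(k * (k - 1)) * ((1 - α) ^ (k - 2) + α ^ (k - 2))) α := by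
  have h := ((((hasDerivAt_id α).const_sub 1).pow (k - 1)).sub
    (hasDerivAt_pow (k - 1) α)).const_mul (k : ℝ)
  refine h.congr_deriv ?_
  simp only [id, Nat.cast_sub hk, Nat.sub_sub]
  ring

lemma bichromaticProbDeriv_half (k : ℕ) : bichromaticProbDeriv k (1 / 2) = 0 := by
  norm_num [bichromaticProbDeriv]

lemma one_add_two_rpow_one_sub_mul_pos {r : ℝ} (hk : 2 ≤ k) (hr : 0 ≤ r) :
    0 < 1 + 2 ^ (1 - (k : ℝ)) * (k * (k - 1) * r - 1) := by
  have hq := two_rpow_one_sub_natCast_lt_one hk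
  have hk1 : (0 : ℝ) ≤ k - 1 := sub_nonneg.2 (by exact_mod_cast (by omega : 1 ≤ k))
  have : 0 ≤ (2 : ℝ) ^ (1 - (k : ℝ)) * (k * (k - 1) * r) := by positivity
  linarith

end bichromaticProb

noncomputable def firstMomentRate (k : ℕ) (r α : ℝ) : ℝ :=
  bichromaticProb k α ^ r / (α ^ α * (1 - α) ^ (1 - α))

noncomputable def logFirstMomentRate (k : ℕ) (r α : ℝ) : ℝ :=
  r * log (bichromaticProb k α) + binEntropy α

section firstMomentRate

variable {k : ℕ} {r α : ℝ}

lemma firstMomentRate_eq_mul_exp_binEntropy (h0 : 0 ≤ α) (h1 : α ≤ 1) :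
    firstMomentRate k r α = bichromaticProb k α ^ r * exp (binEntropy α) := by
  rw [firstMomentRate, rpow_self_mul_one_sub_rpow_one_sub h0 h1, exp_neg, div_inv_eq_mul]

lemma firstMomentRate_half (k : ℕ) (r : ℝ) :
    firstMomentRate k r (1 / 2) = 2 * (1 - 2 ^ (1 - (k : ℝ))) ^ r := by
  rw [firstMomentRate_eq_mul_exp_binEntropy (by norm_num) (by norm_num), bichromaticProb_half,
    one_div, binEntropy_two_inv, exp_log two_pos, mul_comm]

lemma firstMomentRate_lt_half (hk : 2 ≤ k) (hr : 0 ≤ r) (h0 : 0 ≤ α) (h1 : α ≤ 1)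
    (hne : α ≠ 1 / 2) : firstMomentRate k r α < firstMomentRate k r (1 / 2) := by
  have hs : 0 ≤ bichromaticProb k α := bichromaticProb_nonneg (by omega) h0 h1
  have hq : 0 < bichromaticProb k (1 / 2) ^ r := rpow_pos_of_pos (bichromaticProb_half_pos hk) r
  have hH : exp (binEntropy α) < 2 := by
    rw [← exp_log two_pos, exp_lt_exp, binEntropy_lt_log_two, ← one_div]
    exact hne
  rw [firstMomentRate_eq_mul_exp_binEntropy h0 h1,
    firstMomentRate_eq_mul_exp_binEntropy (by norm_num) (by norm_num), one_div 2,
    binEntropy_two_inv, exp_log two_pos, ← one_div]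
  calc bichromaticProb k α ^ r * exp (binEntropy α)
      ≤ bichromaticProb k (1 / 2) ^ r * exp (binEntropy α) := by
        gcongr
        exact bichromaticProb_le_half h0 h1
    _ < bichromaticProb k (1 / 2) ^ r * 2 := by gcongr

lemma firstMomentRate_eq_exp_logFirstMomentRate (hk : 2 ≤ k) (h0 : 0 < α) (h1 : α < 1) :
    firstMomentRate k r α = exp (logFirstMomentRate k r α) := by
  rw [firstMomentRate_eq_mul_exp_binEntropy h0.le h1.le,
    rpow_def_of_pos (bichromaticProb_pos hk h0 h1), logFirstMomentRate, exp_add, mul_comm r]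

lemma hasDerivAt_logFirstMomentRate (hk : 2 ≤ k) (r : ℝ) (h0 : 0 < α) (h1 : α < 1) :
    HasDerivAt (logFirstMomentRate k r)
      (r * (bichromaticProbDeriv k α / bichromaticProb k α) + (log (1 - α) - log α)) α :=
  (((hasDerivAt_bichromaticProb k α).log (bichromaticProb_pos hk h0 h1).ne').const_mul r).add
    (hasDerivAt_binEntropy h0.ne' h1.ne)

lemma hasDerivAt_deriv_logFirstMomentRate_half (hk : 2 ≤ k) (r : ℝ) :
    HasDerivAt
      (fun α => r * (bichromaticProbDeriv k α / bichromaticProb k α) + (log (1 - α) - log α))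
      (-4 * (1 + 2 ^ (1 - (k : ℝ)) * (k * (k - 1) * r - 1)) / (1 - 2 ^ (1 - (k : ℝ))))
      (1 / 2) := by
  have hq := bichromaticProb_half_pos hk
  have h := ((((hasDerivAt_bichromaticProbDeriv (by omega : 1 ≤ k) (1 / 2)).div
    (hasDerivAt_bichromaticProb k (1 / 2)) hq.ne').const_mul r).add
    ((((hasDerivAt_id (1 / 2 : ℝ)).const_sub 1).log (by norm_num)).sub
    (hasDerivAt_log (by norm_num : (1 / 2 : ℝ) ≠ 0))))
  refine h.congr_deriv ?_
  rw [bichromaticProb_half] at hq ⊢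
  obtain ⟨m, rfl⟩ : ∃ m, k = m + 2 := ⟨k - 2, by omega⟩
  rw [bichromaticProbDeriv_half, two_rpow_one_sub_natCast] at *
  simp only [id, Nat.add_sub_cancel]
  field_simp
  push_cast
  ring

lemma deriv_deriv_firstMomentRate_half (hk : 2 ≤ k) (r : ℝ) :
    deriv (deriv (firstMomentRate k r)) (1 / 2) =
      -8 * (1 - 2 ^ (1 - (k : ℝ))) ^ (r - 1) *
        (1 + 2 ^ (1 - (k : ℝ)) * (k * (k - 1) * r - 1)) := by
  have hU : Ioo (0 : ℝ) 1 ∈ 𝓝 (1 / 2 : ℝ) := Ioo_mem_nhds (by norm_num) (by norm_num)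
  have hexp : firstMomentRate k r =ᶠ[𝓝 (1 / 2)] fun α => exp (logFirstMomentRate k r α) :=
    eventually_of_mem hU fun α hα => firstMomentRate_eq_exp_logFirstMomentRate hk hα.1 hα.2
  have hφ : ∀ᶠ α in 𝓝 (1 / 2 : ℝ), HasDerivAt (logFirstMomentRate k r)
      (r * (bichromaticProbDeriv k α / bichromaticProb k α) + (log (1 - α) - log α)) α :=
    eventually_of_mem hU fun α hα => hasDerivAt_logFirstMomentRate hk r hα.1 hα.2
  have hq := (sub_pos.2 (two_rpow_one_sub_natCast_lt_one hk)).ne'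
  rw [hexp.deriv.deriv_eq,
    deriv_deriv_exp_comp hφ (hasDerivAt_deriv_logFirstMomentRate_half hk r),
    ← firstMomentRate_eq_exp_logFirstMomentRate hk (by norm_num) (by norm_num),
    firstMomentRate_half, bichromaticProbDeriv_half, rpow_sub_one hq]
  norm_num
  field_simp
  ring

end firstMomentRate

/-- First moment rate function: for k ≥ 2 and r > 0, with q = 1 − 2^{1−k}, the function
g(α) = (1 − α^k − (1−α)^k)^r / (α^α (1−α)^{1−α}) on [0,1] (with 0^0 = 1, satisfied by
`Real.rpow`) has its unique maximum at α = 1/2, where g(1/2) = 2 q^r; moreover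
g''(1/2) = −8 (1−2^{1−k})^{r−1} (1 + 2^{1−k}(k(k−1)r − 1)) < 0. -/
theorem first_moment_rate_function (k : ℕ) (hk : 2 ≤ k) (r : ℝ) (hr : 0 < r) (q : ℝ)
    (hq : q = 1 - (2 : ℝ) ^ (1 - (k : ℝ)))
    (g : ℝ → ℝ)
    (hg : ∀ α : ℝ, g α = (1 - α ^ k - (1 - α) ^ k) ^ r / (α ^ α * (1 - α) ^ (1 - α))) :
    g (1 / 2) = 2 * q ^ r ∧
    (∀ α ∈ Set.Icc (0 : ℝ) 1, α ≠ 1 / 2 → g α < g (1 / 2)) ∧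
    deriv (deriv g) (1 / 2) =
      -8 * (1 - (2 : ℝ) ^ (1 - (k : ℝ))) ^ (r - 1) *
        (1 + (2 : ℝ) ^ (1 - (k : ℝ)) * ((k : ℝ) * ((k : ℝ) - 1) * r - 1)) ∧
    deriv (deriv g) (1 / 2) < 0 := by
  obtain rfl : g = firstMomentRate k r := funext hg
  subst hq
  have hq : 0 < 1 - (2 : ℝ) ^ (1 - (k : ℝ)) := sub_pos.2 (two_rpow_one_sub_natCast_lt_one hk)
  refine ⟨firstMomentRate_half k r,
    fun α hα hne => firstMomentRate_lt_half hk hr.le hα.1 hα.2 hne,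
    deriv_deriv_firstMomentRate_half hk r, ?_⟩
  rw [deriv_deriv_firstMomentRate_half hk r]
  exact mul_neg_of_neg_of_pos (mul_neg_of_neg_of_pos (by norm_num) (rpow_pos_of_pos hq _))
    (one_add_two_rpow_one_sub_mul_pos hk hr.le)
end

section
/- Fix an integer k ≥ 3 and a real r > 0. Suppose 0 < α < 1/2 and 0 < γ ≤ α/2, let p = p(α,α,γ), and assume p > 0. Define ψ(α,γ) = −ln γ + ln(1−2α+γ) + (kr/p(α,α,γ))(−2α^{k−1} + 2(1−α)^{k−1} − (1−2α+γ)^{k−1} + γ^{k−1}). Then the partial derivative of ψ with respect to α (with γ held fixed, and p varying with α) is strictly negative; explicitly, ∂ψ/∂α = −2/(1−2α+γ) + (2k(k−1)r/p)(−α^{k−2} − (1−α)^{k−2} + (1−2α+γ)^{k−2}) + (2k²r/p²)(γ^{k−1} − (1−2α+γ)^{k−1} − 2α^{k−1} + 2(1−α)^{k−1})(−(α−γ)^{k−1} + α^{k−1} + (1−2α+γ)^{k−1} − (1−α)^{k−1}) < 0. -/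
open Real

/-!
Differentiating gives three terms. The logarithmic one is negative, and the second is
`≤ 0` because `1 - 2α + γ ≤ 1 - α`. The third is `F(α) · p'(α)` up to a negative factor,
where `F(α) = -2α^{k-1} + 2(1-α)^{k-1} - (1-2α+γ)^{k-1} + γ^{k-1}` is the bracket in `ψ`.
Both `F(α) ≥ 0` and `p'(α) ≥ 0` reduce to the convexity-type comparison
`a^n - b^n ≤ c^n - d^n` for `0 ≤ b ≤ a ≤ c` with `a - b = c - d`, which follows from
`a^n - b^n = (a - b) ∑ a^i b^{n-1-i}`.
-/

section PowSubPow

variable {R : Type*} [CommRing R] [LinearOrder R] [IsStrictOrderedRing R]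

theorem pow_sub_pow_le_pow_sub_pow_of_sub_eq (n : ℕ) {a b c d : R} (hb : 0 ≤ b)
    (hba : b ≤ a) (hac : a ≤ c) (hgap : a - b = c - d) :
    a ^ n - b ^ n ≤ c ^ n - d ^ n := by
  have ha : 0 ≤ a := hb.trans hba
  have hbd : b ≤ d := by linarith
  rw [← geom_sum₂_mul a b n, ← geom_sum₂_mul c d n, ← hgap]
  refine mul_le_mul_of_nonneg_right (Finset.sum_le_sum fun i _ => ?_) (sub_nonneg.2 hba)
  exact mul_le_mul (pow_le_pow_left₀ ha hac i) (pow_le_pow_left₀ hb hbd _)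
    (pow_nonneg hb _) (pow_nonneg (ha.trans hac) _)

end PowSubPow

/-- The bracket multiplying `k r / p(a,a,γ)` in `ψ`. -/
noncomputable def psiBracket (k : ℕ) (γ a : ℝ) : ℝ :=
  -2 * a ^ (k - 1) + 2 * (1 - a) ^ (k - 1) - (1 - 2 * a + γ) ^ (k - 1) + γ ^ (k - 1)

noncomputable def psiDeriv (k : ℕ) (r α γ : ℝ) : ℝ :=
  -2 / (1 - 2 * α + γ) +
  2 * (k : ℝ) * ((k : ℝ) - 1) * r / hypP k α α γ *
    (-α ^ (k - 2) - (1 - α) ^ (k - 2) + (1 - 2 * α + γ) ^ (k - 2)) +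
  2 * (k : ℝ) ^ 2 * r / (hypP k α α γ) ^ 2 *
    (γ ^ (k - 1) - (1 - 2 * α + γ) ^ (k - 1) - 2 * α ^ (k - 1)
      + 2 * (1 - α) ^ (k - 1)) *
    (-(α - γ) ^ (k - 1) + α ^ (k - 1) + (1 - 2 * α + γ) ^ (k - 1)
      - (1 - α) ^ (k - 1))

section Derivatives

variable {k : ℕ} {γ α : ℝ}

theorem hasDerivAt_hypP_diag :
    HasDerivAt (fun a => hypP k a a γ)
      (2 * k * ((1 - α) ^ (k - 1) + (α - γ) ^ (k - 1) - α ^ (k - 1)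
        - (1 - 2 * α + γ) ^ (k - 1))) α := by
  have hα := (hasDerivAt_id' α).fun_pow k
  have h1α := ((hasDerivAt_id' α).const_sub 1).fun_pow k
  have hαγ := ((hasDerivAt_id' α).sub_const γ).fun_pow k
  have hc :=
    ((((hasDerivAt_id' α).const_sub 1).fun_sub (hasDerivAt_id' α)).add_const γ).fun_pow k
  refine ((((((((hα.const_sub 1).fun_sub h1α).fun_sub hα).fun_sub h1α).add_const
    (γ ^ k)).fun_add hαγ).fun_add hαγ).fun_add hc).congr_deriv ?_
  rw [show 1 - α - α + γ = 1 - 2 * α + γ by ring]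
  ring

theorem hasDerivAt_psiBracket (hk : 1 ≤ k) :
    HasDerivAt (psiBracket k γ)
      (2 * ((k : ℝ) - 1) *
        (-α ^ (k - 2) - (1 - α) ^ (k - 2) + (1 - 2 * α + γ) ^ (k - 2))) α := by
  have hα := (hasDerivAt_id' α).fun_pow (k - 1)
  have h1α := ((hasDerivAt_id' α).const_sub 1).fun_pow (k - 1)
  have hc := ((((hasDerivAt_id' α).const_mul 2).const_sub 1).add_const γ).fun_pow (k - 1)
  refine ((((hα.const_mul (-2)).fun_add (h1α.const_mul 2)).fun_sub hc).add_const
    (γ ^ (k - 1))).congr_deriv ?_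
  rw [show k - 1 - 1 = k - 2 by omega, Nat.cast_sub hk, Nat.cast_one]
  ring

theorem hasDerivAt_psi (hk : 1 ≤ k) (r : ℝ) (hc : 0 < 1 - 2 * α + γ)
    (hp : hypP k α α γ ≠ 0) :
    HasDerivAt (fun a => -log γ + log (1 - 2 * a + γ) + k * r / hypP k a a γ * psiBracket k γ a)
      (psiDeriv k r α γ) α := by
  have hlog := ((((hasDerivAt_id' α).const_mul 2).const_sub 1).add_const γ).log hc.ne'
  have hquot := ((hasDerivAt_const α ((k : ℝ) * r)).fun_div hasDerivAt_hypP_diag hp).fun_mul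
    (hasDerivAt_psiBracket (γ := γ) hk)
  refine (((hasDerivAt_const α (-log γ)).fun_add hlog).fun_add hquot).congr_deriv ?_
  unfold psiDeriv psiBracket
  field_simp
  ring

end Derivatives

section Signs

variable {α γ : ℝ}

theorem psiBracket_nonneg (k : ℕ) (hγ0 : 0 ≤ γ) (hγα : γ ≤ α) (hα : α ≤ 1 / 2) :
    0 ≤ psiBracket k γ α := by
  have hgap := pow_sub_pow_le_pow_sub_pow_of_sub_eq (k - 1) hγ0
    (by linarith : γ ≤ 1 - 2 * α + γ) (by linarith : 1 - 2 * α + γ ≤ 1 - α)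
    (by ring : 1 - 2 * α + γ - γ = 1 - α - α)
  have hmono : α ^ (k - 1) ≤ (1 - α) ^ (k - 1) :=
    pow_le_pow_left₀ (hγ0.trans hγα) (by linarith) _
  unfold psiBracket
  linarith

/-- `2k` times this is the derivative of `a ↦ p(a,a,γ)` at `α`. -/
theorem hypP_diag_deriv_nonneg (n : ℕ) (hγ0 : 0 ≤ γ) (hγα : 2 * γ ≤ α)
    (hα : α ≤ 1 / 2) :
    0 ≤ (1 - α) ^ n + (α - γ) ^ n - α ^ n - (1 - 2 * α + γ) ^ n := by
  have hgap := pow_sub_pow_le_pow_sub_pow_of_sub_eq n (by linarith : 0 ≤ α - γ)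
    (by linarith : α - γ ≤ α) (by linarith : α ≤ 1 - α)
    (by ring : α - (α - γ) = 1 - α - (1 - α - γ))
  have hmono : (1 - 2 * α + γ) ^ n ≤ (1 - α - γ) ^ n :=
    pow_le_pow_left₀ (by linarith) (by linarith) _
  linarith

theorem psiDeriv_neg {k : ℕ} {r : ℝ} (hr : 0 ≤ r) (hk : 1 ≤ k) (hα0 : 0 ≤ α)
    (hα : α < 1 / 2) (hγ0 : 0 ≤ γ) (hγα : 2 * γ ≤ α) (hp : 0 < hypP k α α γ) :
    psiDeriv k r α γ < 0 := by
  have hc : 0 < 1 - 2 * α + γ := by linarith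
  have hlog : -2 / (1 - 2 * α + γ) < 0 := div_neg_of_neg_of_pos (by norm_num) hc
  have hk1 : (0 : ℝ) ≤ k - 1 := sub_nonneg.2 (by exact_mod_cast hk)
  have hsecond : -α ^ (k - 2) - (1 - α) ^ (k - 2) + (1 - 2 * α + γ) ^ (k - 2) ≤ 0 := by
    have := pow_le_pow_left₀ hc.le (by linarith : 1 - 2 * α + γ ≤ 1 - α) (k - 2)
    linarith [pow_nonneg hα0 (k - 2)]
  have hF : 0 ≤ γ ^ (k - 1) - (1 - 2 * α + γ) ^ (k - 1) - 2 * α ^ (k - 1)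
      + 2 * (1 - α) ^ (k - 1) := by
    have := psiBracket_nonneg k hγ0 (by linarith) hα.le
    unfold psiBracket at this
    linarith
  have hp' := hypP_diag_deriv_nonneg (k - 1) hγ0 hγα hα.le
  unfold psiDeriv
  refine add_neg_of_neg_of_nonpos (add_neg_of_neg_of_nonpos hlog ?_) ?_
  · exact mul_nonpos_of_nonneg_of_nonpos
      (div_nonneg (mul_nonneg (mul_nonneg (by positivity) hk1) hr) hp.le) hsecond
  · exact mul_nonpos_of_nonneg_of_nonpos (mul_nonneg (by positivity) hF) (by linarith)

end Signs

/-- For k ≥ 3, r > 0, 0 < α < 1/2, 0 < γ ≤ α/2 and p(α,α,γ) > 0, the function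
ψ(a) = −ln γ + ln(1−2a+γ) + (kr/p(a,a,γ))(−2a^{k−1} + 2(1−a)^{k−1} − (1−2a+γ)^{k−1} + γ^{k−1})
has derivative at a = α equal to
−2/(1−2α+γ) + (2k(k−1)r/p)(−α^{k−2} − (1−α)^{k−2} + (1−2α+γ)^{k−2})
+ (2k²r/p²)(γ^{k−1} − (1−2α+γ)^{k−1} − 2α^{k−1} + 2(1−α)^{k−1})
    (−(α−γ)^{k−1} + α^{k−1} + (1−2α+γ)^{k−1} − (1−α)^{k−1}),
and this derivative is strictly negative. -/
theorem psi_derivative_negative (k : ℕ) (hk : 3 ≤ k) (r α γ : ℝ) (hr : 0 < r)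
    (hα0 : 0 < α) (hα : α < 1 / 2) (hγ0 : 0 < γ) (hγ : γ ≤ α / 2)
    (hp : 0 < hypP k α α γ)
    (ψ : ℝ → ℝ)
    (hψ : ∀ a : ℝ, ψ a = -Real.log γ + Real.log (1 - 2 * a + γ) +
      (k : ℝ) * r / hypP k a a γ *
        (-2 * a ^ (k - 1) + 2 * (1 - a) ^ (k - 1) - (1 - 2 * a + γ) ^ (k - 1)
          + γ ^ (k - 1))) :
    deriv ψ α =
      -2 / (1 - 2 * α + γ) +
      2 * (k : ℝ) * ((k : ℝ) - 1) * r / hypP k α α γ *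
        (-α ^ (k - 2) - (1 - α) ^ (k - 2) + (1 - 2 * α + γ) ^ (k - 2)) +
      2 * (k : ℝ) ^ 2 * r / (hypP k α α γ) ^ 2 *
        (γ ^ (k - 1) - (1 - 2 * α + γ) ^ (k - 1) - 2 * α ^ (k - 1)
          + 2 * (1 - α) ^ (k - 1)) *
        (-(α - γ) ^ (k - 1) + α ^ (k - 1) + (1 - 2 * α + γ) ^ (k - 1)
          - (1 - α) ^ (k - 1)) ∧
    deriv ψ α < 0 := by
  have hk1 : 1 ≤ k := by omega
  have hc : 0 < 1 - 2 * α + γ := by linarith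
  have hderiv : deriv ψ α = psiDeriv k r α γ := by
    rw [funext hψ]
    exact (hasDerivAt_psi hk1 r hc hp.ne').deriv
  exact ⟨hderiv, hderiv ▸ psiDeriv_neg hr.le hk1 hα0.le hα hγ0.le (by linarith) hp⟩
end

section
/- Let d ≥ 2 and n ≥ 1 be integers and let z₁,…,z_d be non-negative integers with z₁ + ⋯ + z_d = n; set ζ_i = z_i/n. Then the multinomial coefficient satisfies n!/(z₁!⋯z_d!) < (7/6) √(2πn) · (∏_{i=1}^{d} ζ_i^{−ζ_i})^n, with the convention 0^0 = 1. If moreover every z_i is strictly positive and z₁ ≤ n/2, then n!/(z₁!⋯z_d!) ≤ (2πn)^{−(d−1)/2} · (∏_{i=1}^{d} ζ_i^{−1/2}) · (∏_{i=1}^{d} ζ_i^{−ζ_i})^n. -/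
/-!
Write `k! = r_k √(2πk) (k/e)^k`; by Stirling the ratio `r_k` decreases from
`r_1 = e / √(2π) < 7/6` to its limit `1`. Since `(n/e)^n = ∏ (n/z_i)^{z_i} (z_i/e)^{z_i}`, the
first bound follows from `r_n < 7/6` and `z! ≥ (z/e)^z`, the second from
`z_i! ≥ √(2πz_i) (z_i/e)^{z_i}` together with `r_n ≤ r_{z_j} ≤ ∏ r_{z_i}` for any `j`.
-/

open Real
open scoped Nat

namespace Stirling

noncomputable def stirlingApprox (n : ℕ) : ℝ := √(2 * π * n) * (n / exp 1) ^ n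

lemma stirlingApprox_nonneg (n : ℕ) : 0 ≤ stirlingApprox n := by
  unfold stirlingApprox; positivity

lemma stirlingApprox_pos {n : ℕ} (hn : n ≠ 0) : 0 < stirlingApprox n := by
  unfold stirlingApprox; positivity

lemma factorial_div_stirlingApprox (n : ℕ) : n ! / stirlingApprox n = stirlingSeq n / √π := by
  rw [stirlingApprox, stirlingSeq, show 2 * π * n = π * (2 * n) by ring, sqrt_mul pi_pos.le,
    div_div]
  ring

lemma stirlingSeq_le_of_le {k n : ℕ} (hk : k ≠ 0) (hkn : k ≤ n) :
    stirlingSeq n ≤ stirlingSeq k := by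
  obtain ⟨k, rfl⟩ := Nat.exists_eq_succ_of_ne_zero hk
  obtain ⟨n, rfl⟩ := Nat.exists_eq_succ_of_ne_zero (by omega : n ≠ 0)
  exact stirlingSeq'_antitone (Nat.succ_le_succ_iff.mp hkn)

lemma factorial_mul_stirlingApprox_le {k n : ℕ} (hk : k ≠ 0) (hkn : k ≤ n) :
    n ! * stirlingApprox k ≤ k ! * stirlingApprox n := by
  rw [← div_le_div_iff₀ (stirlingApprox_pos (by omega)) (stirlingApprox_pos hk),
    factorial_div_stirlingApprox, factorial_div_stirlingApprox]
  gcongr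
  exact stirlingSeq_le_of_le hk hkn

lemma exp_one_lt_seven_div_six_mul_sqrt_two_pi : exp 1 < 7 / 6 * √(2 * π) := by
  have : 5 / 2 < √(2 * π) := lt_sqrt_of_sq_lt (by linarith [pi_gt_d2])
  linarith [exp_one_lt_d9]

lemma factorial_lt_seven_div_six_mul_stirlingApprox {n : ℕ} (hn : n ≠ 0) :
    n ! < 7 / 6 * stirlingApprox n := by
  rw [← div_lt_iff₀ (stirlingApprox_pos hn), factorial_div_stirlingApprox,
    div_lt_iff₀ (sqrt_pos.mpr pi_pos)]
  calc stirlingSeq n ≤ stirlingSeq 1 := stirlingSeq_le_of_le one_ne_zero (by omega)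
    _ = exp 1 / √2 := stirlingSeq_one
    _ < 7 / 6 * √π := by
      rw [div_lt_iff₀ (by positivity), mul_assoc, ← sqrt_mul pi_pos.le, mul_comm π]
      exact exp_one_lt_seven_div_six_mul_sqrt_two_pi

end Stirling

open Stirling

lemma pow_div_exp_one_le_factorial (n : ℕ) : ((n : ℝ) / exp 1) ^ n ≤ n ! := by
  have := Real.pow_div_factorial_le_exp (n : ℝ) (Nat.cast_nonneg n) n
  rw [div_le_iff₀ (by positivity), ← exp_one_pow] at this
  rw [div_pow, div_le_iff₀ (by positivity)]
  linarith

lemma div_exp_one_pow_eq (N k : ℕ) :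
    ((N : ℝ) / exp 1) ^ k = ((N : ℝ) / k) ^ k * ((k : ℝ) / exp 1) ^ k := by
  rcases eq_or_ne k 0 with rfl | hk
  · simp
  · rw [← mul_pow, div_mul_div_cancel₀ (by positivity)]

lemma rpow_neg_div_pow_eq (k n : ℕ) (hn : n ≠ 0) :
    (((k : ℝ) / n) ^ (-((k : ℝ) / n))) ^ n = ((n : ℝ) / k) ^ k := by
  have hk : (0 : ℝ) ≤ k / n := by positivity
  rw [← rpow_natCast _ n, ← rpow_mul hk, show -((k : ℝ) / n) * n = -k by field_simp,
    rpow_neg hk, rpow_natCast, ← inv_pow, inv_div]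

lemma sqrt_div_prod_sqrt_mul {ι : Type*} (s : Finset ι) {a : ℝ} (ha : 0 < a) {x : ι → ℝ}
    (hx : ∀ i ∈ s, 0 ≤ x i) :
    √a / ∏ i ∈ s, √(a * x i) =
      a ^ (-(((s.card : ℝ) - 1) / 2)) * ∏ i ∈ s, x i ^ (-(1 / 2) : ℝ) := by
  have hpow : a ^ (-(((s.card : ℝ) - 1) / 2)) = √a / √a ^ s.card := by
    rw [sqrt_eq_rpow, ← rpow_natCast, ← rpow_mul ha.le, ← rpow_sub ha]
    ring_nf
  have hinv : ∏ i ∈ s, x i ^ (-(1 / 2) : ℝ) = (∏ i ∈ s, √(x i))⁻¹ := by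
    rw [← Finset.prod_inv_distrib]
    exact Finset.prod_congr rfl fun i hi ↦ by rw [rpow_neg (hx i hi), sqrt_eq_rpow]
  simp only [sqrt_mul ha.le, Finset.prod_mul_distrib, Finset.prod_const]
  rw [hpow, hinv]
  ring

section Multinomial

variable {ι : Type*} {s : Finset ι} {f : ι → ℕ} {N : ℕ}

lemma Stirling.stirlingApprox_eq_of_sum_eq (hN : ∑ i ∈ s, f i = N) :
    stirlingApprox N =
      √(2 * π * N) * (∏ i ∈ s, ((N : ℝ) / f i) ^ f i) * ∏ i ∈ s, ((f i : ℝ) / exp 1) ^ f i := by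
  have hsplit : ((N : ℝ) / exp 1) ^ N = ∏ i ∈ s, ((N : ℝ) / exp 1) ^ f i := by
    rw [Finset.prod_pow_eq_pow_sum, hN]
  rw [stirlingApprox, hsplit, mul_assoc √(2 * π * N), ← Finset.prod_mul_distrib]
  exact congrArg _ (Finset.prod_congr rfl fun i _ ↦ div_exp_one_pow_eq N (f i))

lemma Stirling.factorial_mul_prod_stirlingApprox_le (hN : ∑ i ∈ s, f i = N) (hs : s.Nonempty)
    (hf : ∀ i ∈ s, f i ≠ 0) :
    N ! * ∏ i ∈ s, stirlingApprox (f i) ≤ stirlingApprox N * ∏ i ∈ s, ((f i)! : ℝ) := by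
  classical
  obtain ⟨j, hj⟩ := hs
  have hjN : f j ≤ N := hN ▸ Finset.single_le_sum (fun i _ ↦ Nat.zero_le (f i)) hj
  have hrest : ∏ i ∈ s.erase j, stirlingApprox (f i) ≤ ∏ i ∈ s.erase j, ((f i)! : ℝ) :=
    Finset.prod_le_prod (fun i _ ↦ stirlingApprox_nonneg _) fun i _ ↦ le_factorial_stirling _
  rw [← Finset.mul_prod_erase s _ hj, ← Finset.mul_prod_erase s (fun i ↦ ((f i)! : ℝ)) hj]
  calc (N ! : ℝ) * (stirlingApprox (f j) * ∏ i ∈ s.erase j, stirlingApprox (f i))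
      = N ! * stirlingApprox (f j) * ∏ i ∈ s.erase j, stirlingApprox (f i) := by ring
    _ ≤ (f j)! * stirlingApprox N * ∏ i ∈ s.erase j, ((f i)! : ℝ) :=
      mul_le_mul (factorial_mul_stirlingApprox_le (hf j hj) hjN) hrest
        (Finset.prod_nonneg fun i _ ↦ stirlingApprox_nonneg _)
        (mul_nonneg (Nat.cast_nonneg _) (stirlingApprox_nonneg N))
    _ = stirlingApprox N * ((f j)! * ∏ i ∈ s.erase j, ((f i)! : ℝ)) := by ring

lemma Nat.cast_multinomial_mul_prod_factorial (hN : ∑ i ∈ s, f i = N) :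
    (Nat.multinomial s f : ℝ) * ∏ i ∈ s, ((f i)! : ℝ) = N ! := by
  rw [← hN, ← Nat.multinomial_spec s f]
  push_cast
  ring

theorem Nat.multinomial_lt_stirling_bound (hN : ∑ i ∈ s, f i = N) (hN0 : N ≠ 0) :
    (Nat.multinomial s f : ℝ) < 7 / 6 * √(2 * π * N) * ∏ i ∈ s, ((N : ℝ) / f i) ^ f i := by
  have hfact : 0 < ∏ i ∈ s, ((f i)! : ℝ) := Finset.prod_pos fun i _ ↦ by positivity
  rw [← mul_lt_mul_iff_left₀ hfact, Nat.cast_multinomial_mul_prod_factorial hN]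
  calc (N ! : ℝ) < 7 / 6 * stirlingApprox N := factorial_lt_seven_div_six_mul_stirlingApprox hN0
    _ = 7 / 6 * √(2 * π * N) * (∏ i ∈ s, ((N : ℝ) / f i) ^ f i) *
          ∏ i ∈ s, ((f i : ℝ) / exp 1) ^ f i := by
      rw [stirlingApprox_eq_of_sum_eq hN]; ring
    _ ≤ _ := by
      gcongr with i
      exact pow_div_exp_one_le_factorial (f i)

lemma Nat.multinomial_mul_prod_sqrt_le (hN : ∑ i ∈ s, f i = N) (hs : s.Nonempty)
    (hf : ∀ i ∈ s, f i ≠ 0) :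
    (Nat.multinomial s f : ℝ) * ∏ i ∈ s, √(2 * π * f i) ≤
      √(2 * π * N) * ∏ i ∈ s, ((N : ℝ) / f i) ^ f i := by
  have hP : 0 < ∏ i ∈ s, ((f i : ℝ) / exp 1) ^ f i :=
    Finset.prod_pos fun i hi ↦ by have := Nat.pos_of_ne_zero (hf i hi); positivity
  have hfact : 0 < ∏ i ∈ s, ((f i)! : ℝ) := Finset.prod_pos fun i _ ↦ by positivity
  have hstirling := factorial_mul_prod_stirlingApprox_le hN hs hf
  rw [← Nat.cast_multinomial_mul_prod_factorial hN, stirlingApprox_eq_of_sum_eq hN] at hstirling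
  simp only [stirlingApprox, Finset.prod_mul_distrib] at hstirling
  rw [← mul_le_mul_iff_left₀ (mul_pos hfact hP)]
  linarith

theorem Nat.multinomial_le_stirling_bound (hN : ∑ i ∈ s, f i = N) (hs : s.Nonempty)
    (hf : ∀ i ∈ s, f i ≠ 0) :
    (Nat.multinomial s f : ℝ) ≤
      (2 * π * N) ^ (-(((s.card : ℝ) - 1) / 2)) * (∏ i ∈ s, ((f i : ℝ) / N) ^ (-(1 / 2) : ℝ)) *
        ∏ i ∈ s, ((N : ℝ) / f i) ^ f i := by
  obtain ⟨j, hj⟩ := hs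
  have hN0 : (N : ℝ) ≠ 0 := by
    have := hN ▸ Finset.single_le_sum (fun i _ ↦ Nat.zero_le (f i)) hj
    exact Nat.cast_ne_zero.mpr (by have := hf j hj; omega)
  have hsqrt : ∏ i ∈ s, √(2 * π * f i) = ∏ i ∈ s, √(2 * π * N * (f i / N)) :=
    Finset.prod_congr rfl fun i _ ↦ by field_simp
  have hpos : 0 < ∏ i ∈ s, √(2 * π * f i) :=
    Finset.prod_pos fun i hi ↦ by have := Nat.pos_of_ne_zero (hf i hi); positivity
  rw [← sqrt_div_prod_sqrt_mul s (by positivity) fun i _ ↦ by positivity, ← hsqrt,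
    div_mul_eq_mul_div, le_div_iff₀ hpos]
  exact Nat.multinomial_mul_prod_sqrt_le hN ⟨j, hj⟩ hf

end Multinomial

/-- Stirling-type bounds for multinomial coefficients.  For non-negative integers
z₁,…,z_d with sum n ≥ 1 and ζ_i = z_i/n: always
n!/(z₁!⋯z_d!) < (7/6)√(2πn) (∏ ζ_i^{−ζ_i})^n  (with 0^0 = 1, satisfied by `Real.rpow`);
and if every z_i is positive and z₁ ≤ n/2 then
n!/(z₁!⋯z_d!) ≤ (2πn)^{−(d−1)/2} (∏ ζ_i^{−1/2}) (∏ ζ_i^{−ζ_i})^n. -/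
theorem multinomial_stirling_bounds (d n : ℕ) (hd : 2 ≤ d) (hn : 1 ≤ n)
    (z : Fin d → ℕ) (hz : ∑ i, z i = n) :
    (Nat.multinomial Finset.univ z : ℝ) <
      7 / 6 * Real.sqrt (2 * Real.pi * n) *
        (∏ i, ((z i : ℝ) / n) ^ (-((z i : ℝ) / n))) ^ n ∧
    ((∀ i, 0 < z i) → (z ⟨0, by omega⟩ : ℝ) ≤ (n : ℝ) / 2 →
      (Nat.multinomial Finset.univ z : ℝ) ≤
        (2 * Real.pi * n) ^ (-(((d : ℝ) - 1) / 2)) *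
          (∏ i, ((z i : ℝ) / n) ^ (-(1 / 2) : ℝ)) *
          (∏ i, ((z i : ℝ) / n) ^ (-((z i : ℝ) / n))) ^ n) := by
  have hentropy :
      (∏ i, ((z i : ℝ) / n) ^ (-((z i : ℝ) / n))) ^ n = ∏ i, ((n : ℝ) / z i) ^ z i := by
    rw [← Finset.prod_pow]
    exact Finset.prod_congr rfl fun i _ ↦ rpow_neg_div_pow_eq _ _ (by omega)
  rw [hentropy]
  refine ⟨Nat.multinomial_lt_stirling_bound hz (by omega), fun hpos _ ↦ ?_⟩
  have h := Nat.multinomial_le_stirling_bound hz ⟨⟨0, by omega⟩, Finset.mem_univ _⟩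
    fun i _ ↦ (hpos i).ne'
  rwa [Finset.card_univ, Fintype.card_fin] at h
end
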